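/- For a bounded linear operator T on a complex Banach space, σ(T)\σ_e(T) ⊆ σ_a(T) if and only if σ(T)\σ_bf(T) ⊆ σ_a(T). -/

import Mathlib

open Filter Topology

variable {X : Type*} [NormedAddCommGroup X] [NormedSpace ℂ X] [CompleteSpace X]

/-- `S` is a Fredholm operator. -/
def IsFredholm (S : X →L[ℂ] X) : Prop :=
  FiniteDimensional ℂ (LinearMap.ker ((S : X →L[ℂ] X) : X →ₗ[ℂ] X)) ∧
  IsClosed ((LinearMap.range ((S : X →L[ℂ] X) : X →ₗ[ℂ] X) : Submodule ℂ X) : Set X) ∧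
  FiniteDimensional ℂ (X ⧸ LinearMap.range ((S : X →L[ℂ] X) : X →ₗ[ℂ] X))

/-- `S` is a Weyl operator: Fredholm of index zero. -/
def IsWeyl (S : X →L[ℂ] X) : Prop :=
  IsFredholm S ∧
  Module.finrank ℂ (LinearMap.ker ((S : X →L[ℂ] X) : X →ₗ[ℂ] X)) = Module.finrank ℂ (X ⧸ LinearMap.range ((S : X →L[ℂ] X) : X →ₗ[ℂ] X))

/-- `S` is a B-Fredholm operator: for some `n`, `R(S^n)` is closed and the restriction
`S_[n] : R(S^n) → R(S^n)` is Fredholm (its kernel is `ker S ⊓ R(S^n)`, its range is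
`R(S^(n+1))`). -/
def IsBFredholm (S : X →L[ℂ] X) : Prop :=
  ∃ n : ℕ, IsClosed ((LinearMap.range ((S ^ n : X →L[ℂ] X) : X →ₗ[ℂ] X) : Submodule ℂ X) : Set X) ∧
    IsClosed ((LinearMap.range ((S ^ (n + 1) : X →L[ℂ] X) : X →ₗ[ℂ] X) : Submodule ℂ X) : Set X) ∧
    FiniteDimensional ℂ ↥(LinearMap.ker ((S : X →L[ℂ] X) : X →ₗ[ℂ] X) ⊓ LinearMap.range ((S ^ n : X →L[ℂ] X) : X →ₗ[ℂ] X)) ∧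
    FiniteDimensional ℂ (↥(LinearMap.range ((S ^ n : X →L[ℂ] X) : X →ₗ[ℂ] X)) ⧸
      Submodule.comap (LinearMap.range ((S ^ n : X →L[ℂ] X) : X →ₗ[ℂ] X)).subtype (LinearMap.range ((S ^ (n + 1) : X →L[ℂ] X) : X →ₗ[ℂ] X)))

/-- `S` is a B-Weyl operator: B-Fredholm of index zero. -/
def IsBWeyl (S : X →L[ℂ] X) : Prop :=
  ∃ n : ℕ, IsClosed ((LinearMap.range ((S ^ n : X →L[ℂ] X) : X →ₗ[ℂ] X) : Submodule ℂ X) : Set X) ∧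
    IsClosed ((LinearMap.range ((S ^ (n + 1) : X →L[ℂ] X) : X →ₗ[ℂ] X) : Submodule ℂ X) : Set X) ∧
    FiniteDimensional ℂ ↥(LinearMap.ker ((S : X →L[ℂ] X) : X →ₗ[ℂ] X) ⊓ LinearMap.range ((S ^ n : X →L[ℂ] X) : X →ₗ[ℂ] X)) ∧
    FiniteDimensional ℂ (↥(LinearMap.range ((S ^ n : X →L[ℂ] X) : X →ₗ[ℂ] X)) ⧸
      Submodule.comap (LinearMap.range ((S ^ n : X →L[ℂ] X) : X →ₗ[ℂ] X)).subtype (LinearMap.range ((S ^ (n + 1) : X →L[ℂ] X) : X →ₗ[ℂ] X))) ∧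
    Module.finrank ℂ ↥(LinearMap.ker ((S : X →L[ℂ] X) : X →ₗ[ℂ] X) ⊓ LinearMap.range ((S ^ n : X →L[ℂ] X) : X →ₗ[ℂ] X)) =
      Module.finrank ℂ (↥(LinearMap.range ((S ^ n : X →L[ℂ] X) : X →ₗ[ℂ] X)) ⧸
        Submodule.comap (LinearMap.range ((S ^ n : X →L[ℂ] X) : X →ₗ[ℂ] X)).subtype (LinearMap.range ((S ^ (n + 1) : X →L[ℂ] X) : X →ₗ[ℂ] X)))

/-- `S` has finite ascent. -/
def HasFiniteAscent (S : X →L[ℂ] X) : Prop :=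
  ∃ n : ℕ, LinearMap.ker ((S ^ n : X →L[ℂ] X) : X →ₗ[ℂ] X) = LinearMap.ker ((S ^ (n + 1) : X →L[ℂ] X) : X →ₗ[ℂ] X)

/-- `S` has finite descent. -/
def HasFiniteDescent (S : X →L[ℂ] X) : Prop :=
  ∃ n : ℕ, LinearMap.range ((S ^ n : X →L[ℂ] X) : X →ₗ[ℂ] X) = LinearMap.range ((S ^ (n + 1) : X →L[ℂ] X) : X →ₗ[ℂ] X)

/-- The approximate point spectrum of `T`: points `λ` where `T - λ` is not bounded below. -/
def sigma_a (T : X →L[ℂ] X) : Set ℂ :=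
  {l : ℂ | ¬ ∃ c > (0 : ℝ), ∀ x : X, c * ‖x‖ ≤ ‖(T - l • 1) x‖}

/-- The essential spectrum of `T`. -/
def sigma_e (T : X →L[ℂ] X) : Set ℂ := {l : ℂ | ¬ IsFredholm (T - l • 1)}

/-- The Weyl spectrum of `T`. -/
def sigma_w (T : X →L[ℂ] X) : Set ℂ := {l : ℂ | ¬ IsWeyl (T - l • 1)}

/-- The B-Fredholm spectrum of `T`. -/
def sigma_bf (T : X →L[ℂ] X) : Set ℂ := {l : ℂ | ¬ IsBFredholm (T - l • 1)}

/-- The B-Weyl spectrum of `T`. -/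
def sigma_bw (T : X →L[ℂ] X) : Set ℂ := {l : ℂ | ¬ IsBWeyl (T - l • 1)}

/-- The poles of the resolvent of `T`: spectral points with finite ascent and descent. -/
def poles (T : X →L[ℂ] X) : Set ℂ :=
  {l : ℂ | l ∈ spectrum ℂ T ∧ HasFiniteAscent (T - l • 1) ∧ HasFiniteDescent (T - l • 1)}

/-- The poles of `T` of finite rank. -/
def poles0 (T : X →L[ℂ] X) : Set ℂ :=
  {l : ℂ | l ∈ poles T ∧ FiniteDimensional ℂ (LinearMap.ker ((T - l • 1 : X →L[ℂ] X) : X →ₗ[ℂ] X))}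

/-- The left poles of `T`: points `λ ∈ σ_a(T)` with `p = p(T-λ) < ∞` and `R((T-λ)^(p+1))`
closed. -/
def leftPoles (T : X →L[ℂ] X) : Set ℂ :=
  {l : ℂ | l ∈ sigma_a T ∧ ∃ p : ℕ,
    LinearMap.ker (((T - l • 1) ^ p : X →L[ℂ] X) : X →ₗ[ℂ] X) = LinearMap.ker (((T - l • 1) ^ (p + 1) : X →L[ℂ] X) : X →ₗ[ℂ] X) ∧
    (∀ m : ℕ, m < p → LinearMap.ker (((T - l • 1) ^ m : X →L[ℂ] X) : X →ₗ[ℂ] X) ≠ LinearMap.ker (((T - l • 1) ^ (m + 1) : X →L[ℂ] X) : X →ₗ[ℂ] X)) ∧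
    IsClosed ((LinearMap.range (((T - l • 1) ^ (p + 1) : X →L[ℂ] X) : X →ₗ[ℂ] X) : Submodule ℂ X) : Set X)}

/-- The left poles of `T` of finite rank. -/
def leftPoles0 (T : X →L[ℂ] X) : Set ℂ :=
  {l : ℂ | l ∈ leftPoles T ∧ FiniteDimensional ℂ (LinearMap.ker ((T - l • 1 : X →L[ℂ] X) : X →ₗ[ℂ] X))}

/-- The isolated points of a subset of `ℂ`. -/
def isoPts (A : Set ℂ) : Set ℂ := {l : ℂ | l ∈ A ∧ ¬ AccPt l (𝓟 A)}

/-- `E(T)`: isolated spectral points that are eigenvalues. -/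
def Eset (T : X →L[ℂ] X) : Set ℂ :=
  {l : ℂ | l ∈ isoPts (spectrum ℂ T) ∧ LinearMap.ker ((T - l • 1 : X →L[ℂ] X) : X →ₗ[ℂ] X) ≠ ⊥}

/-- `E⁰(T)`: isolated spectral points that are eigenvalues of finite multiplicity. -/
def Eset0 (T : X →L[ℂ] X) : Set ℂ :=
  {l : ℂ | l ∈ isoPts (spectrum ℂ T) ∧ LinearMap.ker ((T - l • 1 : X →L[ℂ] X) : X →ₗ[ℂ] X) ≠ ⊥ ∧
    FiniteDimensional ℂ (LinearMap.ker ((T - l • 1 : X →L[ℂ] X) : X →ₗ[ℂ] X))}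

/-- `E_a(T)`: isolated points of the approximate point spectrum that are eigenvalues. -/
def Ea (T : X →L[ℂ] X) : Set ℂ :=
  {l : ℂ | l ∈ isoPts (sigma_a T) ∧ LinearMap.ker ((T - l • 1 : X →L[ℂ] X) : X →ₗ[ℂ] X) ≠ ⊥}

/-- `E_a⁰(T)`: isolated points of `σ_a(T)` that are eigenvalues of finite multiplicity. -/
def Ea0 (T : X →L[ℂ] X) : Set ℂ :=
  {l : ℂ | l ∈ isoPts (sigma_a T) ∧ LinearMap.ker ((T - l • 1 : X →L[ℂ] X) : X →ₗ[ℂ] X) ≠ ⊥ ∧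
    FiniteDimensional ℂ (LinearMap.ker ((T - l • 1 : X →L[ℂ] X) : X →ₗ[ℂ] X))}

/-!
A Fredholm operator is B-Fredholm (take `n = 0`), so `σ_bf(T) ⊆ σ_e(T)` and one inclusion is
immediate. Conversely, if `λ ∉ σ_a(T)` then `S = T - λ` is bounded below, hence injective with
closed range, and then `S^n` induces an injection `X ⧸ R(S) → R(S^n) ⧸ R(S^(n+1))`; so if `S` is
also B-Fredholm, it is Fredholm.
-/

namespace LinearMap

variable {R L M N : Type*} [Ring R] [AddCommGroup L] [AddCommGroup M] [AddCommGroup N]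
  [Module R L] [Module R M] [Module R N]

def quotRangeToQuotRangeComp (f : L →ₗ[R] M) (p : M →ₗ[R] N) :
    (M ⧸ range f) →ₗ[R] (range p ⧸ (range (p ∘ₗ f)).comap (range p).subtype) :=
  (range f).mapQ _ p.rangeRestrict (by rintro _ ⟨y, rfl⟩; exact ⟨y, rfl⟩)

theorem quotRangeToQuotRangeComp_surjective (f : L →ₗ[R] M) (p : M →ₗ[R] N) :
    Function.Surjective (quotRangeToQuotRangeComp f p) := by
  rw [← range_eq_top, quotRangeToQuotRangeComp, Submodule.range_mapQ, range_rangeRestrict,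
    Submodule.map_top, Submodule.range_mkQ]

theorem quotRangeToQuotRangeComp_injective (f : L →ₗ[R] M) {p : M →ₗ[R] N}
    (hp : Function.Injective p) : Function.Injective (quotRangeToQuotRangeComp f p) := by
  rw [← ker_eq_bot, quotRangeToQuotRangeComp, Submodule.ker_mapQ, eq_bot_iff,
    Submodule.map_le_iff_le_comap, Submodule.comap_bot, Submodule.ker_mkQ]
  rintro x ⟨y, hy⟩
  exact ⟨y, hp hy⟩

end LinearMap

section

variable {S : X →L[ℂ] X}

theorem IsBFredholm.isFredholm_of_antilipschitz {K : NNReal} (hS : IsBFredholm S)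
    (hK : AntilipschitzWith K S) : IsFredholm S := by
  obtain ⟨n, -, -, -, hquot⟩ := hS
  rw [pow_succ, ContinuousLinearMap.toLinearMap_mul, Module.End.mul_eq_comp] at hquot
  have hinj : Function.Injective (S ^ n) :=
    FunLike.coe_pow_eq_iterate S n ▸ hK.injective.iterate n
  refine ⟨?_, ?_, Module.Finite.of_injective _ (LinearMap.quotRangeToQuotRangeComp_injective _ hinj)⟩
  · rw [LinearMap.ker_eq_bot.mpr hK.injective]
    infer_instance
  · rw [LinearMap.coe_range]
    exact hK.isClosed_range S.uniformContinuous

omit [CompleteSpace X]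

theorem IsFredholm.isBFredholm (hS : IsFredholm S) : IsBFredholm S := by
  obtain ⟨hker, hrange, hcoker⟩ := hS
  have hrange_pow_zero : LinearMap.range ((S ^ 0 : X →L[ℂ] X) : X →ₗ[ℂ] X) = ⊤ := by
    rw [pow_zero, ContinuousLinearMap.toLinearMap_one, Module.End.one_eq_id, LinearMap.range_id]
  refine ⟨0, ?_, ?_, ?_, ?_⟩
  · rw [hrange_pow_zero, Submodule.top_coe]
    exact isClosed_univ
  · rwa [pow_one]
  · rwa [hrange_pow_zero, inf_top_eq]
  · rw [pow_succ, ContinuousLinearMap.toLinearMap_mul, Module.End.mul_eq_comp]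
    exact Module.Finite.of_surjective _ (LinearMap.quotRangeToQuotRangeComp_surjective _ _)

theorem sigma_bf_subset_sigma_e (T : X →L[ℂ] X) : sigma_bf T ⊆ sigma_e T :=
  fun _ hl hF => hl hF.isBFredholm

end

/-- `σ(T)\σ_e(T) ⊆ σ_a(T)` iff `σ(T)\σ_bf(T) ⊆ σ_a(T)`. -/
theorem stmt2 (T : X →L[ℂ] X) :
    spectrum ℂ T \ sigma_e T ⊆ sigma_a T ↔ spectrum ℂ T \ sigma_bf T ⊆ sigma_a T := by
  refine ⟨fun h l ⟨hl, hbf⟩ hbound => ?_,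
    (Set.sdiff_subset_sdiff_right (sigma_bf_subset_sigma_e T)).trans⟩
  obtain ⟨K, hK⟩ := antilipschitzWith_iff_exists_mul_le_norm.mpr hbound
  exact h ⟨hl, fun hnF => hnF ((not_not.mp hbf).isFredholm_of_antilipschitz hK)⟩ hbound
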